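/- arXiv:1703.03598 — 2 statements merged into one kernel-verified Lean document; each statement's English description precedes it below -/
import Mathlib

section
/- Let λ ≥ 0 and let f ∈ M_σ^λ(φ) have Taylor coefficients aₙ. If (1+λ)B₁ ≤ |B₁² + (1+λ)(B₁−B₂)|, then |a₂| ≤ B₁√B₁ / √( (1+λ)·|B₁² + (1+λ)(B₁−B₂)| ). -/
/-
Write `f = z + a₂ z² + a₃ z³ + ⋯` and `ω = c₁ z + c₂ z² + ⋯` for the Schwarz function of the
subordination. Clearing denominators and comparing the coefficients of `z²` and `z³` gives
`(1 + λ) a₂ = B₁ c₁` and `2 (1 + 2λ) a₃ - (1 + 3λ) a₂² = B₁ c₂ + B₂ c₁²`. The inverse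
`g = w - a₂ w² + (2 a₂² - a₃) w³ + ⋯` satisfies the same relations with a Schwarz function
`k₁ w + k₂ w² + ⋯`, so `k₁ = -c₁`, and adding the two second relations eliminates `a₃`:
`2 (1 + λ) a₂² (B₁² - (1 + λ) B₂) = B₁³ (c₂ + k₂)`. The Schwarz–Pick bound `|c₂| ≤ 1 - |c₁|²`
(and the same for `k`) with `|c₁| = (1 + λ) |a₂| / B₁` turns this into
`(1 + λ) |a₂|² (|B₁² - (1 + λ) B₂| + (1 + λ) B₁) ≤ B₁³`, and the bracket dominates `|D₁|`.
-/

open Metric Set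

noncomputable section

/-- `f` is bi-univalent on the unit disk, with `g` the univalent analytic
continuation of `f⁻¹` to the unit disk. -/
def IsBiUnivalent (f g : ℂ → ℂ) : Prop :=
  DifferentiableOn ℂ f (ball 0 1) ∧ f 0 = 0 ∧ deriv f 0 = 1 ∧
  Set.InjOn f (ball 0 1) ∧
  DifferentiableOn ℂ g (ball 0 1) ∧ Set.InjOn g (ball 0 1) ∧
  ∀ w : ℂ, ‖w‖ < 1/4 → f (g w) = w

/-- `φ` is an analytic univalent function on the unit disk with positive real
part there, normalized by `φ 0 = 1`. -/
def IsMaMinda (φ : ℂ → ℂ) : Prop :=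
  DifferentiableOn ℂ φ (ball 0 1) ∧ Set.InjOn φ (ball 0 1) ∧ φ 0 = 1 ∧
  ∀ z ∈ ball (0:ℂ) 1, 0 < (φ z).re

/-- Membership in `M^λ(φ)`: `f` is normalized analytic on the unit disk and
`λ(1 + z f''(z)/f'(z)) + (1-λ) z f'(z)/f(z) ≺ φ(z)`. -/
def MemMlam (lam : ℝ) (φ f : ℂ → ℂ) : Prop :=
  DifferentiableOn ℂ f (ball 0 1) ∧ f 0 = 0 ∧ deriv f 0 = 1 ∧
  ∃ ω : ℂ → ℂ, DifferentiableOn ℂ ω (ball 0 1) ∧ ω 0 = 0 ∧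
    (∀ z ∈ ball (0:ℂ) 1, ω z ∈ ball (0:ℂ) 1) ∧
    ∀ z ∈ ball (0:ℂ) 1, z ≠ 0 →
      (lam : ℂ) * (1 + z * iteratedDeriv 2 f z / deriv f z)
        + (1 - (lam : ℂ)) * (z * deriv f z / f z) = φ (ω z)

open Filter Topology ComplexConjugate

section CubicJet

variable {𝕜 : Type*} [RCLike 𝕜] {u v : 𝕜 → 𝕜} {x a₀ a₁ a₂ a₃ b₀ b₁ b₂ b₃ : 𝕜}

theorem AnalyticAt.iteratedDeriv_two_mul (hu : AnalyticAt 𝕜 u x) (hv : AnalyticAt 𝕜 v x) :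
    iteratedDeriv 2 (fun z => u z * v z) x =
      iteratedDeriv 2 u x * v x + 2 * deriv u x * deriv v x + u x * iteratedDeriv 2 v x := by
  rw [iteratedDeriv_fun_mul hu.contDiffAt hv.contDiffAt]
  simp only [Finset.sum_range_succ, Finset.range_one, Finset.sum_singleton, Nat.choose_zero_right,
    Nat.choose_succ_self_right, Nat.choose_self, Nat.cast_one, iteratedDeriv_zero,
    iteratedDeriv_one, Nat.add_one_sub_one, tsub_zero, tsub_self]
  ring

theorem AnalyticAt.iteratedDeriv_three_mul (hu : AnalyticAt 𝕜 u x) (hv : AnalyticAt 𝕜 v x) :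
    iteratedDeriv 3 (fun z => u z * v z) x =
      iteratedDeriv 3 u x * v x + 3 * iteratedDeriv 2 u x * deriv v x
        + 3 * deriv u x * iteratedDeriv 2 v x + u x * iteratedDeriv 3 v x := by
  rw [iteratedDeriv_fun_mul hu.contDiffAt hv.contDiffAt]
  simp only [Finset.sum_range_succ, Finset.range_one, Finset.sum_singleton, Nat.choose,
    Nat.cast_one, iteratedDeriv_zero, iteratedDeriv_one, Nat.add_one_sub_one,
    Nat.reduceSub, tsub_zero, tsub_self, add_zero]
  ring

/-- `u` is analytic at `x` and `u (x + h) = a₀ + a₁ h + a₂ h² + a₃ h³ + O(h⁴)`. -/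
structure HasCubicJetAt (u : 𝕜 → 𝕜) (x a₀ a₁ a₂ a₃ : 𝕜) : Prop where
  analyticAt : AnalyticAt 𝕜 u x
  apply_eq : u x = a₀
  deriv_eq : deriv u x = a₁
  iteratedDeriv_two_eq : iteratedDeriv 2 u x = 2 * a₂
  iteratedDeriv_three_eq : iteratedDeriv 3 u x = 6 * a₃

theorem AnalyticAt.hasCubicJetAt (h : AnalyticAt 𝕜 u x) :
    HasCubicJetAt u x (u x) (deriv u x) (iteratedDeriv 2 u x / 2) (iteratedDeriv 3 u x / 6) :=
  ⟨h, rfl, rfl, by ring, by ring⟩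

theorem hasCubicJetAt_id (x : 𝕜) : HasCubicJetAt (fun z => z) x x 1 0 0 := by
  refine ⟨analyticAt_id, rfl, ?_, ?_, ?_⟩ <;> simp [iteratedDeriv_fun_id]

theorem hasCubicJetAt_const (c x : 𝕜) : HasCubicJetAt (fun _ => c) x c 0 0 0 := by
  refine ⟨analyticAt_const, rfl, deriv_const x c, ?_, ?_⟩ <;> simp [iteratedDeriv_const]

namespace HasCubicJetAt

theorem unique (hu : HasCubicJetAt u x a₀ a₁ a₂ a₃) (hu' : HasCubicJetAt u x b₀ b₁ b₂ b₃) :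
    a₀ = b₀ ∧ a₁ = b₁ ∧ a₂ = b₂ ∧ a₃ = b₃ := by
  refine ⟨hu.apply_eq.symm.trans hu'.apply_eq, hu.deriv_eq.symm.trans hu'.deriv_eq, ?_, ?_⟩
  · simpa using hu.iteratedDeriv_two_eq.symm.trans hu'.iteratedDeriv_two_eq
  · simpa using hu.iteratedDeriv_three_eq.symm.trans hu'.iteratedDeriv_three_eq

theorem congr_of_eventuallyEq (hu : HasCubicJetAt u x a₀ a₁ a₂ a₃) (h : v =ᶠ[𝓝 x] u) :
    HasCubicJetAt v x a₀ a₁ a₂ a₃ :=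
  ⟨hu.analyticAt.congr h.symm, h.eq_of_nhds.trans hu.apply_eq, h.deriv_eq.trans hu.deriv_eq,
    (h.iteratedDeriv_eq 2).trans hu.iteratedDeriv_two_eq,
    (h.iteratedDeriv_eq 3).trans hu.iteratedDeriv_three_eq⟩

protected theorem deriv (hu : HasCubicJetAt u x a₀ a₁ a₂ a₃) :
    HasCubicJetAt (deriv u) x a₁ (2 * a₂) (3 * a₃) (iteratedDeriv 4 u x / 6) := by
  refine ⟨hu.analyticAt.deriv, hu.deriv_eq, ?_, ?_, by rw [← iteratedDeriv_succ']; ring⟩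
  · rw [← iteratedDeriv_one, ← iteratedDeriv_succ', hu.iteratedDeriv_two_eq]
  · rw [← iteratedDeriv_succ', hu.iteratedDeriv_three_eq]; ring

theorem add (hu : HasCubicJetAt u x a₀ a₁ a₂ a₃) (hv : HasCubicJetAt v x b₀ b₁ b₂ b₃) :
    HasCubicJetAt (fun z => u z + v z) x (a₀ + b₀) (a₁ + b₁) (a₂ + b₂) (a₃ + b₃) := by
  refine ⟨hu.analyticAt.add hv.analyticAt, by simp [hu.apply_eq, hv.apply_eq], ?_, ?_, ?_⟩
  · rw [deriv_fun_add hu.analyticAt.differentiableAt hv.analyticAt.differentiableAt,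
      hu.deriv_eq, hv.deriv_eq]
  · rw [iteratedDeriv_fun_add hu.analyticAt.contDiffAt hv.analyticAt.contDiffAt,
      hu.iteratedDeriv_two_eq, hv.iteratedDeriv_two_eq, mul_add]
  · rw [iteratedDeriv_fun_add hu.analyticAt.contDiffAt hv.analyticAt.contDiffAt,
      hu.iteratedDeriv_three_eq, hv.iteratedDeriv_three_eq, mul_add]

theorem mul (hu : HasCubicJetAt u x a₀ a₁ a₂ a₃) (hv : HasCubicJetAt v x b₀ b₁ b₂ b₃) :
    HasCubicJetAt (fun z => u z * v z) x (a₀ * b₀) (a₀ * b₁ + a₁ * b₀)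
      (a₀ * b₂ + a₁ * b₁ + a₂ * b₀) (a₀ * b₃ + a₁ * b₂ + a₂ * b₁ + a₃ * b₀) := by
  obtain ⟨hu, hu₀, hu₁, hu₂, hu₃⟩ := hu
  obtain ⟨hv, hv₀, hv₁, hv₂, hv₃⟩ := hv
  refine ⟨hu.mul hv, by rw [hu₀, hv₀], ?_, ?_, ?_⟩
  · rw [deriv_fun_mul hu.differentiableAt hv.differentiableAt, hu₀, hu₁, hv₀, hv₁]
    ring
  · rw [hu.iteratedDeriv_two_mul hv, hu₀, hu₁, hu₂, hv₀, hv₁, hv₂]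
    ring
  · rw [hu.iteratedDeriv_three_mul hv, hu₀, hu₁, hu₂, hu₃, hv₀, hv₁, hv₂, hv₃]
    ring

end HasCubicJetAt

theorem deriv_comp_eventuallyEq (hu : AnalyticAt 𝕜 u (v x)) (hv : AnalyticAt 𝕜 v x) :
    deriv (fun z => u (v z)) =ᶠ[𝓝 x] fun z => deriv u (v z) * deriv v z := by
  filter_upwards [hv.continuousAt.eventually hu.eventually_analyticAt, hv.eventually_analyticAt]
    with z hzu hzv
  exact deriv_comp z hzu.differentiableAt hzv.differentiableAt

theorem iteratedDeriv_succ_comp (hu : AnalyticAt 𝕜 u (v x)) (hv : AnalyticAt 𝕜 v x) (n : ℕ) :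
    iteratedDeriv (n + 1) (fun z => u (v z)) x =
      iteratedDeriv n (fun z => deriv u (v z) * deriv v z) x := by
  rw [iteratedDeriv_succ']
  exact (deriv_comp_eventuallyEq hu hv).iteratedDeriv_eq n

theorem HasCubicJetAt.comp (hu : HasCubicJetAt u (v x) a₀ a₁ a₂ a₃)
    (hv : HasCubicJetAt v x b₀ b₁ b₂ b₃) :
    HasCubicJetAt (fun z => u (v z)) x a₀ (a₁ * b₁) (a₁ * b₂ + a₂ * b₁ ^ 2)
      (a₁ * b₃ + 2 * a₂ * b₁ * b₂ + a₃ * b₁ ^ 3) := by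
  have hu₁ := hu.deriv
  have hu₂ := hu₁.deriv
  have hv₁ := hv.deriv
  have hw : AnalyticAt 𝕜 (fun z => deriv u (v z)) x := hu₁.analyticAt.comp hv.analyticAt
  have hw' : AnalyticAt 𝕜 (fun z => deriv (deriv u) (v z)) x := hu₂.analyticAt.comp hv.analyticAt
  have hd : ∀ {w : 𝕜 → 𝕜}, AnalyticAt 𝕜 w (v x) →
      deriv (fun z => w (v z)) x = deriv w (v x) * deriv v x := fun hw =>
    deriv_comp x hw.differentiableAt hv.analyticAt.differentiableAt
  have hw₁ : deriv (fun z => deriv u (v z)) x = 2 * a₂ * b₁ := by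
    rw [hd hu₁.analyticAt, hu₁.deriv_eq, hv.deriv_eq]
  have hw₂ : iteratedDeriv 2 (fun z => deriv u (v z)) x = 6 * a₃ * b₁ ^ 2 + 4 * a₂ * b₂ := by
    rw [iteratedDeriv_succ_comp hu₁.analyticAt hv.analyticAt, iteratedDeriv_one,
      deriv_fun_mul hw'.differentiableAt hv₁.analyticAt.differentiableAt, hd hu₂.analyticAt,
      hu₂.apply_eq, hu₂.deriv_eq, hv.deriv_eq, hv₁.deriv_eq]
    ring
  refine ⟨hu.analyticAt.comp hv.analyticAt, hu.apply_eq, ?_, ?_, ?_⟩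
  · rw [hd hu.analyticAt, hu.deriv_eq, hv.deriv_eq]
  · rw [iteratedDeriv_succ_comp hu.analyticAt hv.analyticAt, iteratedDeriv_one,
      deriv_fun_mul hw.differentiableAt hv₁.analyticAt.differentiableAt, hw₁, hu₁.apply_eq,
      hv.deriv_eq, hv₁.deriv_eq]
    ring
  · rw [iteratedDeriv_succ_comp hu.analyticAt hv.analyticAt,
      hw.iteratedDeriv_two_mul hv₁.analyticAt, hw₁, hw₂, hu₁.apply_eq, hv.deriv_eq, hv₁.deriv_eq,
      hv₁.iteratedDeriv_two_eq]
    ring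

theorem HasCubicJetAt.rightInverse {f g : 𝕜 → 𝕜} (hf : HasCubicJetAt f 0 0 1 a₂ a₃)
    (hg : AnalyticAt 𝕜 g 0) (hg₀ : g 0 = 0) (h : ∀ᶠ w in 𝓝 0, f (g w) = w) :
    HasCubicJetAt g 0 0 1 (-a₂) (2 * a₂ ^ 2 - a₃) := by
  have hg' := hg.hasCubicJetAt
  rw [hg₀] at hg'
  obtain ⟨-, h₁, h₂, h₃⟩ :=
    ((hasCubicJetAt_id 0).congr_of_eventuallyEq h).unique ((hg₀ ▸ hf).comp hg')
  have hd : deriv g 0 = 1 := by linear_combination -h₁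
  rw [hd] at h₂ h₃
  exact ⟨hg, hg₀, hd, by linear_combination -2 * h₂, by linear_combination -6 * h₃ + 12 * a₂ * h₂⟩

end CubicJet

namespace Complex

theorem normSq_one_sub_conj_mul_sub_normSq_sub (a w : ℂ) :
    normSq (1 - conj a * w) - normSq (w - a) = (1 - normSq a) * (1 - normSq w) := by
  simp only [normSq_apply, sub_re, sub_im, mul_re, mul_im, conj_re, conj_im, one_re, one_im]
  ring

theorem one_sub_conj_mul_ne_zero {a w : ℂ} (ha : ‖a‖ < 1) (hw : ‖w‖ ≤ 1) :
    1 - conj a * w ≠ 0 := by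
  rw [sub_ne_zero, ne_comm]
  apply ne_of_apply_ne norm
  rw [norm_mul, norm_conj, norm_one]
  nlinarith [norm_nonneg a, norm_nonneg w]

theorem norm_div_one_sub_conj_mul_le_one {a w : ℂ} (ha : ‖a‖ < 1) (hw : ‖w‖ ≤ 1) :
    ‖(w - a) / (1 - conj a * w)‖ ≤ 1 := by
  rw [norm_div, div_le_one (norm_pos_iff.2 (one_sub_conj_mul_ne_zero ha hw)),
    ← sq_le_sq₀ (norm_nonneg _) (norm_nonneg _), Complex.sq_norm, Complex.sq_norm,
    ← sub_nonneg, normSq_one_sub_conj_mul_sub_normSq_sub, ← Complex.sq_norm, ← Complex.sq_norm]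
  apply mul_nonneg <;> nlinarith [norm_nonneg a, norm_nonneg w]

theorem norm_deriv_le_one_sub_sq_of_mapsTo_ball {ψ : ℂ → ℂ}
    (hd : DifferentiableOn ℂ ψ (ball 0 1)) (hψ : MapsTo ψ (ball 0 1) (closedBall 0 1)) :
    ‖deriv ψ 0‖ ≤ 1 - ‖ψ 0‖ ^ 2 := by
  have h0 : (0 : ℂ) ∈ ball (0 : ℂ) 1 := mem_ball_self one_pos
  have hψ0 : ‖ψ 0‖ ≤ 1 := mem_closedBall_zero_iff.1 (hψ h0)
  rcases hψ0.eq_or_lt with hψ0 | hψ0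
  · have hmax : IsMaxOn (norm ∘ ψ) (ball 0 1) 0 := fun z hz => by
      simpa [hψ0] using hψ hz
    have hconst : ψ =ᶠ[𝓝 0] fun _ => ψ 0 := eventuallyEq_of_mem (isOpen_ball.mem_nhds h0)
      (eqOn_of_isPreconnected_of_isMaxOn_norm (convex_ball 0 1).isPreconnected isOpen_ball hd h0
        hmax)
    simp [hconst.deriv_eq, hψ0]
  set a := ψ 0
  have hden : ∀ z ∈ ball (0 : ℂ) 1, 1 - conj a * ψ z ≠ 0 := fun z hz =>
    one_sub_conj_mul_ne_zero hψ0 (mem_closedBall_zero_iff.1 (hψ hz))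
  set χ : ℂ → ℂ := fun z => (ψ z - a) / (1 - conj a * ψ z)
  have hχ : MapsTo χ (ball 0 1) (closedBall (χ 0) 1) := fun z hz => by
    simpa [χ, a] using norm_div_one_sub_conj_mul_le_one hψ0 (mem_closedBall_zero_iff.1 (hψ hz))
  have hχd : DifferentiableOn ℂ χ (ball 0 1) :=
    ((hd.sub_const a).div ((differentiableOn_const _).sub ((differentiableOn_const _).mul hd)) hden)
  -- the Möbius map `χ` has `χ'(0) = ψ'(0) / (1 - |ψ(0)|²)`, and `|χ'(0)| ≤ 1` by Schwarz
  have hψ' := (hd.differentiableAt (isOpen_ball.mem_nhds h0)).hasDerivAt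
  have hχ' : deriv χ 0 = deriv ψ 0 / (1 - conj a * a) := by
    have := ((hψ'.sub_const a).fun_div ((hψ'.const_mul (conj a)).const_sub 1) (hden 0 h0)).deriv
    have ha : 1 - conj a * a ≠ 0 := hden 0 h0
    rw [this, show ψ 0 = a from rfl]
    field_simp
    ring
  have hnorm : (1 : ℂ) - conj a * a = ((1 - ‖a‖ ^ 2 : ℝ) : ℂ) := by
    rw [mul_comm, mul_conj, normSq_eq_norm_sq]; push_cast; ring
  have hpos : 0 < 1 - ‖a‖ ^ 2 := by nlinarith [norm_nonneg a]
  have := norm_deriv_le_one_of_mapsTo_ball hχd hχ one_pos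
  rwa [hχ', hnorm, norm_div, norm_real, Real.norm_of_nonneg hpos.le, div_le_one hpos] at this

theorem norm_iteratedDeriv_two_div_two_le_of_mapsTo_ball {ω : ℂ → ℂ}
    (hd : DifferentiableOn ℂ ω (ball 0 1)) (h0 : ω 0 = 0) (hω : MapsTo ω (ball 0 1) (ball 0 1)) :
    ‖iteratedDeriv 2 ω 0 / 2‖ ≤ 1 - ‖deriv ω 0‖ ^ 2 := by
  have hmem := ball_mem_nhds (0 : ℂ) one_pos
  set ψ := dslope ω 0
  have hψd : DifferentiableOn ℂ ψ (ball 0 1) := (differentiableOn_dslope hmem).2 hd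
  have hψ : MapsTo ψ (ball 0 1) (closedBall 0 1) := fun z hz => by
    have hω' : MapsTo ω (ball 0 1) (closedBall (ω 0) 1) := by
      rw [h0]; exact hω.mono_right ball_subset_closedBall
    simpa using norm_dslope_le_div_of_mapsTo_ball hd hω' hz
  -- `ω z = z ψ(z)`, so the second Taylor coefficient of `ω` is `ψ'(0)`
  have hωψ : (fun z => z * ψ z) = ω := funext fun z => by simpa [h0] using sub_smul_dslope ω 0 z
  have hjet := (hasCubicJetAt_id 0).mul (hψd.analyticAt hmem).hasCubicJetAt
  rw [hωψ] at hjet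
  obtain ⟨-, -, h₂, -⟩ := hjet.unique (hd.analyticAt hmem).hasCubicJetAt
  have hψ₀ : ψ 0 = deriv ω 0 := dslope_same ω 0
  rw [← h₂, ← hψ₀]
  simpa using norm_deriv_le_one_sub_sq_of_mapsTo_ball hψd hψ

end Complex

theorem eventuallyEq_mul_of_eventually_eq_div {lam : ℂ} {f Φ : ℂ → ℂ} (hf : AnalyticAt ℂ f 0)
    (hf₀ : f 0 = 0) (hf₁ : deriv f 0 = 1)
    (h : ∀ᶠ z in 𝓝[≠] 0, lam * (1 + z * iteratedDeriv 2 f z / deriv f z)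
      + (1 - lam) * (z * deriv f z / f z) = Φ z) :
    (fun z => lam * (f z * deriv f z + z * (f z * iteratedDeriv 2 f z))
      + (1 - lam) * (z * (deriv f z * deriv f z))) =ᶠ[𝓝 0] fun z => Φ z * (f z * deriv f z) := by
  have hne : ∀ᶠ z in 𝓝[≠] 0, f z ≠ 0 :=
    (hf₁ ▸ hf.differentiableAt.hasDerivAt).eventually_ne one_ne_zero
  have hne' : ∀ᶠ z in 𝓝 0, deriv f z ≠ 0 :=
    hf.deriv.continuousAt.eventually_ne (hf₁ ▸ one_ne_zero)
  filter_upwards [eventually_nhdsWithin_iff.1 (h.and hne), hne'] with z hz hz'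
  rcases eq_or_ne z 0 with rfl | hz₀
  · simp [hf₀]
  obtain ⟨hz, hfz⟩ := hz hz₀
  rw [← hz]
  field_simp

theorem MemMlam.exists_coeff_relations {lam : ℝ} {φ f : ℂ → ℂ} {B₁ B₂ B₃ a₂ a₃ : ℂ}
    (hf : MemMlam lam φ f) (hφ : HasCubicJetAt φ 0 1 B₁ B₂ B₃)
    (ha : HasCubicJetAt f 0 0 1 a₂ a₃) :
    ∃ c₁ c₂ : ℂ, ‖c₂‖ ≤ 1 - ‖c₁‖ ^ 2 ∧ (1 + lam) * a₂ = B₁ * c₁ ∧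
      2 * (1 + 2 * lam) * a₃ - (1 + 3 * lam) * a₂ ^ 2 = B₁ * c₂ + B₂ * c₁ ^ 2 := by
  obtain ⟨-, -, -, ω, hωd, hω₀, hωmaps, heq⟩ := hf
  have hmem := ball_mem_nhds (0 : ℂ) one_pos
  have hω := (hωd.analyticAt hmem).hasCubicJetAt
  rw [hω₀] at hω
  refine ⟨deriv ω 0, iteratedDeriv 2 ω 0 / 2,
    Complex.norm_iteratedDeriv_two_div_two_le_of_mapsTo_ball hωd hω₀ hωmaps, ?_⟩
  have ha' := ha.deriv
  have ha'' := ha'.deriv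
  rw [← iteratedDeriv_one (f := deriv f), ← iteratedDeriv_succ'] at ha''
  have hid := hasCubicJetAt_id (0 : ℂ)
  have hL := ((hasCubicJetAt_const (lam : ℂ) 0).mul ((ha.mul ha').add (hid.mul (ha.mul ha'')))).add
    ((hasCubicJetAt_const (1 - lam : ℂ) 0).mul (hid.mul (ha'.mul ha')))
  have hR := ((hω₀ ▸ hφ).comp hω).mul (ha.mul ha')
  have hsub : ∀ᶠ z in 𝓝[≠] 0, (lam : ℂ) * (1 + z * iteratedDeriv 2 f z / deriv f z)
      + (1 - (lam : ℂ)) * (z * deriv f z / f z) = φ (ω z) :=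
    eventually_nhdsWithin_iff.2 (eventually_of_mem hmem fun z hz hz₀ => heq z hz hz₀)
  have hLR := eventuallyEq_mul_of_eventually_eq_div ha.analyticAt ha.apply_eq ha.deriv_eq hsub
  obtain ⟨-, -, h₂, h₃⟩ := (hR.congr_of_eventuallyEq hLR).unique hL
  constructor
  · linear_combination -h₂
  · linear_combination -h₃ + 3 * a₂ * h₂

theorem sq_norm_mul_le_of_coeff_relations {lam B₁ : ℝ} {B₂ a₂ a₃ c₁ c₂ k₁ k₂ : ℂ}
    (hlam : 0 ≤ lam) (hB₁ : 0 < B₁) (hc : ‖c₂‖ ≤ 1 - ‖c₁‖ ^ 2) (hk : ‖k₂‖ ≤ 1 - ‖k₁‖ ^ 2)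
    (hf₁ : (1 + lam) * a₂ = B₁ * c₁)
    (hf₂ : 2 * (1 + 2 * lam) * a₃ - (1 + 3 * lam) * a₂ ^ 2 = B₁ * c₂ + B₂ * c₁ ^ 2)
    (hg₁ : (1 + lam) * -a₂ = B₁ * k₁)
    (hg₂ : 2 * (1 + 2 * lam) * (2 * a₂ ^ 2 - a₃) - (1 + 3 * lam) * (-a₂) ^ 2
      = B₁ * k₂ + B₂ * k₁ ^ 2) :
    (1 + lam) * ‖a₂‖ ^ 2 * (‖(B₁ : ℂ) ^ 2 - (1 + lam) * B₂‖ + (1 + lam) * B₁) ≤ B₁ ^ 3 := by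
  have hB₁' : (B₁ : ℂ) ≠ 0 := by exact_mod_cast hB₁.ne'
  have hk₁ : k₁ = -c₁ := mul_left_cancel₀ hB₁' (by linear_combination -hg₁ - hf₁)
  have hkey : 2 * (1 + lam) * a₂ ^ 2 * ((B₁ : ℂ) ^ 2 - (1 + lam) * B₂) = B₁ ^ 3 * (c₂ + k₂) := by
    linear_combination (B₁ : ℂ) ^ 2 * (hf₂ + hg₂) - B₂ * (B₁ * c₁ + (1 + lam) * a₂) * hf₁
      - B₂ * (B₁ * k₁ - (1 + lam) * a₂) * hg₁
  have h1lam : 0 < 1 + lam := by linarith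
  have hn : ‖(1 + lam : ℂ)‖ = 1 + lam := by
    rw [← Complex.ofReal_one, ← Complex.ofReal_add, Complex.norm_real, Real.norm_of_nonneg h1lam.le]
  have hc₁ : (1 + lam) * ‖a₂‖ = B₁ * ‖c₁‖ := by
    simpa [norm_mul, hn, abs_of_pos hB₁] using congrArg norm hf₁
  have hnorm : 2 * (1 + lam) * ‖a₂‖ ^ 2 * ‖(B₁ : ℂ) ^ 2 - (1 + lam) * B₂‖
      = B₁ ^ 3 * ‖c₂ + k₂‖ := by
    simpa [norm_mul, hn, abs_of_pos hB₁] using congrArg norm hkey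
  have hsum : ‖c₂ + k₂‖ ≤ 2 - 2 * ‖c₁‖ ^ 2 := by
    rw [hk₁, norm_neg] at hk
    linarith [norm_add_le c₂ k₂]
  have h3 : B₁ ^ 3 * ‖c₁‖ ^ 2 = B₁ * ((1 + lam) * ‖a₂‖) ^ 2 := by rw [hc₁]; ring
  nlinarith [mul_le_mul_of_nonneg_left hsum (pow_pos hB₁ 3).le]

theorem le_mul_sqrt_div_sqrt_of_sq_mul_le {t B d : ℝ} (ht : 0 ≤ t) (hB : 0 ≤ B) (hd : 0 < d)
    (h : t ^ 2 * d ≤ B ^ 3) : t ≤ B * √B / √d := by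
  rw [le_div_iff₀ (Real.sqrt_pos.2 hd), ← pow_le_pow_iff_left₀ (by positivity) (by positivity)
    two_ne_zero, mul_pow, mul_pow, Real.sq_sqrt hd.le, Real.sq_sqrt hB]
  linarith

theorem stmt_6_general
    (lam : ℝ) (hlam : 0 ≤ lam) (φ f g : ℂ → ℂ)
    (B₁ : ℝ) (B₂ : ℂ) (hB₁ : 0 < B₁)
    (hφ : IsMaMinda φ)
    (hφ1 : deriv φ 0 = (B₁:ℂ))
    (hφ2 : iteratedDeriv 2 φ 0 = 2 * B₂)
    (hbi : IsBiUnivalent f g)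
    (hf : MemMlam lam φ f) (hg : MemMlam lam φ g)
    (a : ℕ → ℂ) (ha : ∀ n, a n = iteratedDeriv n f 0 / (n.factorial : ℂ))
    (D₁ : ℂ) (hD₁ : D₁ = (B₁:ℂ)^2 + (1 + (lam:ℂ)) * ((B₁:ℂ) - B₂))
    (hcond : (1 + lam) * B₁ ≤ ‖D₁‖) :
    ‖a 2‖ ≤ B₁ * Real.sqrt B₁ / Real.sqrt ((1 + lam) * ‖D₁‖) := by
  have hmem := ball_mem_nhds (0 : ℂ) one_pos
  have hφjet : HasCubicJetAt φ 0 1 B₁ B₂ (iteratedDeriv 3 φ 0 / 6) := by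
    simpa [hφ.2.2.1, hφ1, hφ2] using (hφ.1.analyticAt hmem).hasCubicJetAt
  have hfjet : HasCubicJetAt f 0 0 1 (a 2) (a 3) := by
    simpa [ha, Nat.factorial, hf.2.1, hf.2.2.1] using (hf.1.analyticAt hmem).hasCubicJetAt
  obtain ⟨-, -, -, -, -, -, hfg⟩ := hbi
  have hfg : ∀ᶠ w in 𝓝 (0 : ℂ), f (g w) = w :=
    eventually_of_mem (ball_mem_nhds 0 (by norm_num)) fun w hw => hfg w (mem_ball_zero_iff.1 hw)
  have hgjet := hfjet.rightInverse (hg.1.analyticAt hmem) hg.2.1 hfg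
  obtain ⟨c₁, c₂, hc, hf₁, hf₂⟩ := hf.exists_coeff_relations hφjet hfjet
  obtain ⟨k₁, k₂, hk, hg₁, hg₂⟩ := hg.exists_coeff_relations hφjet hgjet
  have hbound := sq_norm_mul_le_of_coeff_relations hlam hB₁ hc hk hf₁ hf₂ hg₁ hg₂
  have hD : ‖D₁‖ ≤ ‖(B₁ : ℂ) ^ 2 - (1 + lam) * B₂‖ + (1 + lam) * B₁ := by
    have : D₁ = ((B₁ : ℂ) ^ 2 - (1 + lam) * B₂) + (((1 + lam) * B₁ : ℝ) : ℂ) := by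
      rw [hD₁]; push_cast; ring
    rw [this]
    refine (norm_add_le _ _).trans_eq ?_
    rw [Complex.norm_real, Real.norm_of_nonneg (by positivity)]
  have hpos : 0 < (1 + lam) * ‖D₁‖ := by
    have : 0 < ‖D₁‖ := lt_of_lt_of_le (by positivity) hcond
    positivity
  refine le_mul_sqrt_div_sqrt_of_sq_mul_le (norm_nonneg _) hB₁.le hpos ?_
  calc ‖a 2‖ ^ 2 * ((1 + lam) * ‖D₁‖) = (1 + lam) * ‖a 2‖ ^ 2 * ‖D₁‖ := by ring
    _ ≤ (1 + lam) * ‖a 2‖ ^ 2 * (‖(B₁ : ℂ) ^ 2 - (1 + lam) * B₂‖ + (1 + lam) * B₁) := by gcongr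
    _ ≤ B₁ ^ 3 := hbound

theorem stmt_6
    (lam : ℝ) (hlam : 0 ≤ lam) (φ f g : ℂ → ℂ)
    (B₁ : ℝ) (B₂ B₃ : ℂ) (hB₁ : 0 < B₁)
    (hφ : IsMaMinda φ)
    (hφ1 : deriv φ 0 = (B₁:ℂ))
    (hφ2 : iteratedDeriv 2 φ 0 = 2 * B₂)
    (hφ3 : iteratedDeriv 3 φ 0 = 6 * B₃)
    (hbi : IsBiUnivalent f g)
    (hf : MemMlam lam φ f) (hg : MemMlam lam φ g)
    (a : ℕ → ℂ) (ha : ∀ n, a n = iteratedDeriv n f 0 / (n.factorial : ℂ))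
    (D₁ : ℂ) (hD₁ : D₁ = (B₁:ℂ)^2 + (1 + (lam:ℂ)) * ((B₁:ℂ) - B₂))
    (hcond : (1 + lam) * B₁ ≤ ‖D₁‖) :
    ‖a 2‖ ≤ B₁ * Real.sqrt B₁ / Real.sqrt ((1 + lam) * ‖D₁‖) :=
  stmt_6_general lam hlam φ f g B₁ B₂ hB₁ hφ hφ1 hφ2 hbi hf hg a ha D₁ hD₁ hcond
end
end

section
/- Let 0 ≤ ρ < 1 and let f ∈ ST_σ(ρ) have Taylor coefficients aₙ. Then: |a₂| ≤ √(2(1−ρ)) if 0 ≤ ρ ≤ 1/2 and |a₂| ≤ 2(1−ρ) if 1/2 ≤ ρ < 1; moreover |a₃| ≤ 2(1−ρ) if 0 ≤ ρ ≤ 1/2 and |a₃| ≤ (1−ρ)(3−2ρ) if 1/2 ≤ ρ < 1. -/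
/-!
Let `P = z f'/f` and `Q = w g'/g`. Both are holomorphic on the disk, equal `1` at `0` and have
real part `> ρ`, so by Carathéodory's lemma their first two Taylor coefficients are at most
`2(1-ρ)` in modulus. Carathéodory's lemma itself follows from the Schwarz–Pick inequality
`|ψ'(0)| ≤ 1 - |ψ(0)|²` for `ψ = φ/z`, `φ = (p-1)/(p+1)`.

Comparing coefficients, `P = 1 + a₂ z + (2a₃ - a₂²) z² + ⋯`, and since `g` inverts `f`,
`g = w - a₂ w² + (2a₂² - a₃) w³ + ⋯`, so `Q = 1 - a₂ w + (3a₂² - 2a₃) w² + ⋯`. Adding the two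
second coefficients bounds `a₂²`; `4a₃ = 3(2a₃ - a₂²) + (3a₂² - 2a₃)` and
`2a₃ = (2a₃ - a₂²) + a₂²` bound `a₃`.

As `f ∘ g = id` is only known near `0`, `g(0) = 0` has to be derived: otherwise `w g'/g` would be
holomorphic at `0` with real part `0` there and `> ρ ≥ 0` nearby, impossible for a holomorphic
function (`exp (-w g'/g)` would have a strict local maximum of its modulus).
-/

open Metric Set

noncomputable section

/-- Membership in `ST_σ(ρ)`: bi-starlike of order `ρ`. -/
def MemSTrho (ρ : ℝ) (f g : ℂ → ℂ) : Prop :=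
  IsBiUnivalent f g ∧
  (∀ z ∈ ball (0:ℂ) 1, z ≠ 0 → ρ < (z * deriv f z / f z).re) ∧
  (∀ w ∈ ball (0:ℂ) 1, w ≠ 0 → ρ < (w * deriv g w / g w).re)

open Filter Topology ComplexConjugate

def IsStarlikeOfOrder (ρ : ℝ) (F : ℂ → ℂ) : Prop :=
  ∀ z ∈ ball (0 : ℂ) 1, z ≠ 0 → ρ < (z * deriv F z / F z).re

theorem iteratedDeriv_succ_id_mul_zero {𝕜 : Type*} [NontriviallyNormedField 𝕜] {u : 𝕜 → 𝕜}
    {k : ℕ} (hu : ContDiffAt 𝕜 (k + 1) u 0) :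
    iteratedDeriv (k + 1) (fun z => z * u z) 0 = (k + 1) * iteratedDeriv k u 0 := by
  rw [iteratedDeriv_fun_mul (f := fun z => z) (n := k + 1) contDiffAt_fun_id hu,
    Finset.sum_eq_single 1]
  · simp [iteratedDeriv_fun_id_zero]
  · intro i _ hi
    simp [iteratedDeriv_fun_id_zero, hi]
  · simp

theorem derivs_of_comp_eventuallyEq_id {𝕜 : Type*} [NontriviallyNormedField 𝕜] {f g : 𝕜 → 𝕜}
    (hf : ContDiffAt 𝕜 3 f 0) (hg : ContDiffAt 𝕜 3 g 0) (hg0 : g 0 = 0) (hf1 : deriv f 0 = 1)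
    (hfg : f ∘ g =ᶠ[𝓝 0] id) :
    deriv g 0 = 1 ∧ iteratedDeriv 2 g 0 = -iteratedDeriv 2 f 0 ∧
      iteratedDeriv 3 g 0 = 3 * iteratedDeriv 2 f 0 ^ 2 - iteratedDeriv 3 f 0 := by
  rw [← hg0] at hf hf1
  have h1 := hfg.deriv_eq
  have h2 := hfg.iteratedDeriv_eq 2
  have h3 := hfg.iteratedDeriv_eq 3
  rw [deriv_comp 0 (hf.differentiableAt (by norm_num)) (hg.differentiableAt (by norm_num))] at h1
  rw [iteratedDeriv_comp_two (hf.of_le (by norm_num)) (hg.of_le (by norm_num))] at h2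
  rw [iteratedDeriv_comp_three hf hg] at h3
  simp only [hf1, one_mul, deriv_id, iteratedDeriv_id] at h1 h2 h3
  rw [hg0] at h2 h3
  simp only [h1] at h2 h3
  norm_num at h2 h3
  refine ⟨h1, by linear_combination h2, ?_⟩
  rw [show iteratedDeriv 2 g 0 = -iteratedDeriv 2 f 0 by linear_combination h2] at h3
  linear_combination h3

theorem coeffs_of_id_mul_deriv_eventuallyEq_mul {F P : ℂ → ℂ} (hF : AnalyticAt ℂ F 0)
    (hP : AnalyticAt ℂ P 0) (h0 : F 0 = 0) (h1 : deriv F 0 = 1)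
    (hFP : (fun z => z * deriv F z) =ᶠ[𝓝 0] fun z => P z * F z) :
    P 0 = 1 ∧ deriv P 0 = iteratedDeriv 2 F 0 / 2 ∧
      iteratedDeriv 2 P 0 = 2 / 3 * iteratedDeriv 3 F 0 - iteratedDeriv 2 F 0 ^ 2 / 2 := by
  have leibniz : ∀ k : ℕ, (k + 1) * iteratedDeriv (k + 1) F 0 = ∑ i ∈ Finset.range (k + 2),
      (k + 1).choose i * iteratedDeriv i P 0 * iteratedDeriv (k + 1 - i) F 0 := fun k => by
    rw [← iteratedDeriv_fun_mul hP.contDiffAt hF.contDiffAt, ← hFP.iteratedDeriv_eq,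
      iteratedDeriv_succ_id_mul_zero hF.deriv.contDiffAt, iteratedDeriv_succ']
  have e1 := leibniz 0
  have e2 := leibniz 1
  have e3 := leibniz 2
  norm_num [Finset.sum_range_succ, Nat.choose] at e1 e2 e3
  simp only [h0, h1, mul_zero, add_zero, mul_one] at e1 e2 e3
  rw [← e1] at e2 e3
  have hP1 : deriv P 0 = iteratedDeriv 2 F 0 / 2 := by linear_combination -e2 / 2
  refine ⟨e1.symm, hP1, ?_⟩
  rw [hP1] at e3
  linear_combination -e3 / 3

theorem coeffs_of_eventuallyEq_one_add_mul {p φ : ℂ → ℂ} (hp : AnalyticAt ℂ p 0)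
    (hφ : AnalyticAt ℂ φ 0) (hp0 : p 0 = 1) (hφ0 : φ 0 = 0)
    (h : p =ᶠ[𝓝 0] fun z => 1 + (1 + p z) * φ z) :
    deriv p 0 = 2 * deriv φ 0 ∧
      iteratedDeriv 2 p 0 = 2 * iteratedDeriv 2 φ 0 + 4 * deriv φ 0 ^ 2 := by
  have leibniz : ∀ k : ℕ, iteratedDeriv (k + 1) p 0 = ∑ i ∈ Finset.range (k + 2),
      (k + 1).choose i * iteratedDeriv i (fun z => 1 + p z) 0 * iteratedDeriv (k + 1 - i) φ 0 :=
    fun k => by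
      rw [h.iteratedDeriv_eq, iteratedDeriv_const_add k.succ_pos,
        iteratedDeriv_fun_mul (contDiffAt_const.add hp.contDiffAt) hφ.contDiffAt]
  have e1 := leibniz 0
  have e2 := leibniz 1
  norm_num [Finset.sum_range_succ, Nat.choose, hp0, hφ0] at e1 e2
  exact ⟨e1, by rw [e2, e1]; ring⟩

theorem normSq_one_sub_conj_mul_sub_normSq_sub (c w : ℂ) :
    Complex.normSq (1 - conj c * w) - Complex.normSq (w - c) =
      (1 - Complex.normSq c) * (1 - Complex.normSq w) := by
  simp only [Complex.normSq_apply, Complex.sub_re, Complex.sub_im, Complex.mul_re,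
    Complex.mul_im, Complex.conj_re, Complex.conj_im, Complex.one_re, Complex.one_im]
  ring

theorem one_sub_conj_mul_ne_zero {c w : ℂ} (hc : ‖c‖ < 1) (hw : ‖w‖ ≤ 1) :
    1 - conj c * w ≠ 0 := by
  refine sub_ne_zero.mpr fun h => ?_
  have : ‖conj c * w‖ < 1 := by
    rw [norm_mul, Complex.norm_conj]
    nlinarith [norm_nonneg c, norm_nonneg w]
  rw [← h, norm_one] at this
  exact lt_irrefl _ this

theorem norm_sub_div_one_sub_conj_mul_le_one {c w : ℂ} (hc : ‖c‖ < 1) (hw : ‖w‖ ≤ 1) :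
    ‖(w - c) / (1 - conj c * w)‖ ≤ 1 := by
  have hden : 0 < ‖1 - conj c * w‖ := norm_pos_iff.mpr (one_sub_conj_mul_ne_zero hc hw)
  rw [norm_div, div_le_one hden, ← sq_le_sq₀ (norm_nonneg _) hden.le, Complex.sq_norm,
    Complex.sq_norm, ← sub_nonneg, normSq_one_sub_conj_mul_sub_normSq_sub]
  rw [← Complex.sq_norm, ← Complex.sq_norm]
  exact mul_nonneg (by nlinarith [norm_nonneg c]) (by nlinarith [norm_nonneg w])

theorem hasDerivAt_sub_div_one_sub_conj_mul {c : ℂ} (hc : ‖c‖ < 1) :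
    HasDerivAt (fun w => (w - c) / (1 - conj c * w)) ((1 - ‖c‖ ^ 2 : ℝ) : ℂ)⁻¹ c := by
  refine (((hasDerivAt_id c).sub_const c).div (((hasDerivAt_id c).const_mul (conj c)).const_sub 1)
    (one_sub_conj_mul_ne_zero hc hc.le)).congr_deriv ?_
  push_cast
  rw [← Complex.conj_mul']
  simp only [id, mul_one, sub_self, zero_mul, sub_zero, one_mul]
  field_simp

theorem norm_deriv_zero_le_one_sub_sq {ψ : ℂ → ℂ} (hd : DifferentiableOn ℂ ψ (ball 0 1))
    (hψ : MapsTo ψ (ball 0 1) (closedBall 0 1)) : ‖deriv ψ 0‖ ≤ 1 - ‖ψ 0‖ ^ 2 := by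
  have hball : ball (0 : ℂ) 1 ∈ 𝓝 0 := ball_mem_nhds 0 one_pos
  have hψ0 : ‖ψ 0‖ ≤ 1 := mem_closedBall_zero_iff.mp (hψ (mem_ball_self one_pos))
  rcases hψ0.lt_or_eq with hlt | heq
  · set m : ℂ → ℂ := fun w => (w - ψ 0) / (1 - conj (ψ 0) * w)
    have hm := hasDerivAt_sub_div_one_sub_conj_mul hlt
    have hχ : MapsTo (m ∘ ψ) (ball 0 1) (closedBall ((m ∘ ψ) 0) 1) := fun z hz => by
      simpa [m] using norm_sub_div_one_sub_conj_mul_le_one hlt (mem_closedBall_zero_iff.mp (hψ hz))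
    have hmd : DifferentiableOn ℂ m (closedBall 0 1) := fun w hw =>
      (DifferentiableAt.fun_div (c := fun w => w - ψ 0) (d := fun w => 1 - conj (ψ 0) * w)
        (by fun_prop) (by fun_prop)
        (one_sub_conj_mul_ne_zero hlt (mem_closedBall_zero_iff.mp hw))).differentiableWithinAt
    have hschwarz := Complex.norm_deriv_le_one_of_mapsTo_ball (hmd.comp hd hψ) hχ one_pos
    have hpos : 0 < 1 - ‖ψ 0‖ ^ 2 := by nlinarith [norm_nonneg (ψ 0)]
    rwa [(hm.comp 0 (hd.differentiableAt hball).hasDerivAt).deriv, norm_mul, norm_inv,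
      Complex.norm_real, Real.norm_of_nonneg hpos.le, inv_mul_le_iff₀ hpos, mul_one] at hschwarz
  · have hmax : IsLocalMax (norm ∘ ψ) 0 := by
      filter_upwards [hball] with z hz
      simpa [heq] using hψ hz
    have hconst : ψ =ᶠ[𝓝 0] fun _ => ψ 0 := Complex.eventually_eq_of_isLocalMax_norm
      (eventually_of_mem hball fun z hz => hd.differentiableAt (isOpen_ball.mem_nhds hz)) hmax
    rw [hconst.deriv_eq, heq]
    simp

theorem norm_sub_one_div_add_one_le_one {w : ℂ} (hw : 0 < w.re) : ‖(w - 1) / (w + 1)‖ ≤ 1 := by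
  have hden : 0 < ‖w + 1‖ := norm_pos_iff.mpr fun h => by
    norm_num [eq_neg_of_add_eq_zero_left h] at hw
  rw [norm_div, div_le_one hden, ← sq_le_sq₀ (norm_nonneg _) hden.le, Complex.sq_norm,
    Complex.sq_norm, Complex.normSq_apply, Complex.normSq_apply]
  simp only [Complex.sub_re, Complex.add_re, Complex.sub_im, Complex.add_im, Complex.one_re,
    Complex.one_im]
  nlinarith

theorem caratheodory_coeff_bounds {p : ℂ → ℂ} (hd : DifferentiableOn ℂ p (ball 0 1))
    (h0 : p 0 = 1) (hre : ∀ z ∈ ball (0 : ℂ) 1, 0 < (p z).re) :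
    ‖deriv p 0‖ ≤ 2 ∧ ‖iteratedDeriv 2 p 0‖ ≤ 4 := by
  have hball : ball (0 : ℂ) 1 ∈ 𝓝 0 := ball_mem_nhds 0 one_pos
  have hne : ∀ z ∈ ball (0 : ℂ) 1, p z + 1 ≠ 0 := fun z hz h => by
    have := hre z hz
    norm_num [eq_neg_of_add_eq_zero_left h] at this
  set φ : ℂ → ℂ := fun z => (p z - 1) / (p z + 1)
  have hφd : DifferentiableOn ℂ φ (ball 0 1) := (hd.sub_const 1).div (hd.add_const 1) hne
  have hφ0 : φ 0 = 0 := by simp [φ, h0]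
  have hφmaps : MapsTo φ (ball 0 1) (closedBall (φ 0) 1) := fun z hz => by
    simpa [hφ0, φ] using norm_sub_one_div_add_one_le_one (hre z hz)
  set ψ := dslope φ 0
  have hψd : DifferentiableOn ℂ ψ (ball 0 1) := (Complex.differentiableOn_dslope hball).mpr hφd
  have hψmaps : MapsTo ψ (ball 0 1) (closedBall 0 1) := fun z hz => by
    simpa using Complex.norm_dslope_le_div_of_mapsTo_ball hφd hφmaps hz
  have hφψ : φ = fun z => z * ψ z := funext fun z => by
    simpa [hφ0] using (sub_smul_dslope φ 0 z).symm
  have hφ1 : deriv φ 0 = ψ 0 := (dslope_same φ 0).symm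
  have hφ2 : iteratedDeriv 2 φ 0 = 2 * deriv ψ 0 := by
    rw [hφψ, iteratedDeriv_succ_id_mul_zero (k := 1) ((hψd.analyticAt hball).contDiffAt)]
    norm_num
  have hrel : p =ᶠ[𝓝 0] fun z => 1 + (1 + p z) * φ z := by
    filter_upwards [hball] with z hz
    have := hne z hz
    simp only [φ]
    field_simp
    ring
  obtain ⟨h1, h2⟩ := coeffs_of_eventuallyEq_one_add_mul (hd.analyticAt hball)
    (hφd.analyticAt hball) h0 hφ0 hrel
  have hψ0 : ‖ψ 0‖ ≤ 1 := mem_closedBall_zero_iff.mp (hψmaps (mem_ball_self one_pos))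
  have hpick := norm_deriv_zero_le_one_sub_sq hψd hψmaps
  refine ⟨?_, ?_⟩
  · rw [h1, hφ1, norm_mul, Complex.norm_two]
    linarith
  · rw [h2, hφ2, hφ1]
    calc ‖2 * (2 * deriv ψ 0) + 4 * ψ 0 ^ 2‖ ≤ 4 * ‖deriv ψ 0‖ + 4 * ‖ψ 0‖ ^ 2 := by
          refine (norm_add_le _ _).trans ?_
          simp only [norm_mul, norm_pow, Complex.norm_ofNat]
          linarith
      _ ≤ 4 := by linarith

theorem caratheodory_coeff_bounds_of_order {ρ : ℝ} (hρ : ρ < 1) {P : ℂ → ℂ}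
    (hd : DifferentiableOn ℂ P (ball 0 1)) (h0 : P 0 = 1)
    (hre : ∀ z ∈ ball (0 : ℂ) 1, ρ < (P z).re) :
    ‖deriv P 0‖ ≤ 2 * (1 - ρ) ∧ ‖iteratedDeriv 2 P 0‖ ≤ 4 * (1 - ρ) := by
  have hρ' : (1 - ρ : ℂ) ≠ 0 := by exact_mod_cast (sub_pos.mpr hρ).ne'
  set p : ℂ → ℂ := fun z => (P z - ρ) / (1 - ρ)
  have hP : P = fun z => ρ + (1 - ρ) * p z := funext fun z => by
    simp only [p]
    field_simp
    ring
  have hcoeff : ∀ k, 0 < k → ‖iteratedDeriv k P 0‖ = (1 - ρ) * ‖iteratedDeriv k p 0‖ :=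
    fun k hk => by
      rw [hP, iteratedDeriv_const_add hk, iteratedDeriv_const_mul_field, norm_mul,
        ← Complex.ofReal_one, ← Complex.ofReal_sub, Complex.norm_real,
        Real.norm_of_nonneg (sub_pos.mpr hρ).le]
  obtain ⟨h1, h2⟩ := caratheodory_coeff_bounds (p := p) ((hd.sub_const _).div_const _)
    (by simp [p, h0, hρ']) fun z hz => by
      simp only [p, ← Complex.ofReal_one, ← Complex.ofReal_sub, Complex.div_ofReal_re,
        Complex.sub_re, Complex.ofReal_re]
      exact div_pos (sub_pos.mpr (hre z hz)) (sub_pos.mpr hρ)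
  rw [← iteratedDeriv_one, hcoeff 1 one_pos, iteratedDeriv_one]
  rw [hcoeff 2 two_pos]
  constructor <;> nlinarith

theorem exists_id_mul_deriv_eq_mul {F : ℂ → ℂ} (hF : DifferentiableOn ℂ F (ball 0 1))
    (h0 : F 0 = 0) (h1 : deriv F 0 ≠ 0) (hne : ∀ z ∈ ball (0 : ℂ) 1, z ≠ 0 → F z ≠ 0) :
    ∃ P : ℂ → ℂ, DifferentiableOn ℂ P (ball 0 1) ∧
      ∀ z ∈ ball (0 : ℂ) 1, z * deriv F z = P z * F z := by
  set U := dslope F 0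
  have hFU : ∀ z, F z = z * U z := fun z => by
    simpa [h0] using (sub_smul_dslope F 0 z).symm
  have hU : DifferentiableOn ℂ U (ball 0 1) :=
    (Complex.differentiableOn_dslope (ball_mem_nhds 0 one_pos)).mpr hF
  have hU0 : ∀ z ∈ ball (0 : ℂ) 1, U z ≠ 0 := by
    intro z hz
    rcases eq_or_ne z 0 with rfl | hz0
    · rwa [show U 0 = deriv F 0 from dslope_same F 0]
    · exact right_ne_zero_of_mul (hFU z ▸ hne z hz hz0)
  refine ⟨fun z => deriv F z / U z, (hF.deriv isOpen_ball).div hU hU0, fun z hz => ?_⟩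
  rw [hFU z]
  field_simp [hU0 z hz]

theorem IsStarlikeOfOrder.coeff_bounds {ρ : ℝ} {F : ℂ → ℂ} (hF : IsStarlikeOfOrder ρ F)
    (hρ : ρ < 1) (hd : DifferentiableOn ℂ F (ball 0 1)) (h0 : F 0 = 0) (h1 : deriv F 0 = 1)
    (hinj : InjOn F (ball 0 1)) :
    ‖iteratedDeriv 2 F 0 / 2‖ ≤ 2 * (1 - ρ) ∧
      ‖2 * (iteratedDeriv 3 F 0 / 6) - (iteratedDeriv 2 F 0 / 2) ^ 2‖ ≤ 2 * (1 - ρ) := by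
  have hball : ball (0 : ℂ) 1 ∈ 𝓝 0 := ball_mem_nhds 0 one_pos
  have hne : ∀ z ∈ ball (0 : ℂ) 1, z ≠ 0 → F z ≠ 0 := fun z hz hz0 hFz =>
    hz0 (hinj hz (mem_ball_self one_pos) (hFz.trans h0.symm))
  obtain ⟨P, hPd, hFP⟩ := exists_id_mul_deriv_eq_mul hd h0 (h1 ▸ one_ne_zero) hne
  obtain ⟨hP0, hP1, hP2⟩ := coeffs_of_id_mul_deriv_eventuallyEq_mul (hd.analyticAt hball)
    (hPd.analyticAt hball) h0 h1 (eventually_of_mem hball hFP)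
  have hPre : ∀ z ∈ ball (0 : ℂ) 1, ρ < (P z).re := fun z hz => by
    rcases eq_or_ne z 0 with rfl | hz0
    · simpa [hP0] using hρ
    · rw [eq_div_of_mul_eq (hne z hz hz0) (hFP z hz).symm]
      exact hF z hz hz0
  obtain ⟨hb1, hb2⟩ := caratheodory_coeff_bounds_of_order hρ hPd hP0 hPre
  rw [hP1] at hb1
  rw [hP2] at hb2
  refine ⟨hb1, ?_⟩
  rw [show 2 * (iteratedDeriv 3 F 0 / 6) - (iteratedDeriv 2 F 0 / 2) ^ 2 =
    (2 / 3 * iteratedDeriv 3 F 0 - iteratedDeriv 2 F 0 ^ 2 / 2) / 2 by ring, norm_div,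
    Complex.norm_two]
  linarith

theorem frequently_re_le_re_of_eventually_differentiableAt {h : ℂ → ℂ} {z₀ : ℂ}
    (hd : ∀ᶠ z in 𝓝 z₀, DifferentiableAt ℂ h z) : ∃ᶠ z in 𝓝[≠] z₀, (h z).re ≤ (h z₀).re := by
  by_contra hlt
  simp only [not_frequently, not_le] at hlt
  have hmax : IsLocalMax (norm ∘ fun z => Complex.exp (-h z)) z₀ := by
    filter_upwards [eventually_nhdsWithin_iff.mp hlt] with z hz
    rcases eq_or_ne z z₀ with rfl | hne
    · exact le_rfl
    · simpa [Complex.norm_exp] using (hz hne).le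
  have hconst := Complex.eventually_eq_of_isLocalMax_norm
    (hd.mono fun z hz => hz.neg.cexp) hmax
  obtain ⟨z, hz, hzlt⟩ := ((hconst.filter_mono nhdsWithin_le_nhds).and hlt).exists
  have := congrArg (fun w => Real.log ‖w‖) hz
  simp only [Pi.neg_apply, Complex.norm_exp, Complex.neg_re, Real.log_exp, neg_inj] at this
  linarith

theorem IsStarlikeOfOrder.apply_zero {ρ : ℝ} {g : ℂ → ℂ} (hg : IsStarlikeOfOrder ρ g)
    (hρ : 0 ≤ ρ) (hd : DifferentiableOn ℂ g (ball 0 1)) : g 0 = 0 := by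
  by_contra hg0
  have hball : ball (0 : ℂ) 1 ∈ 𝓝 0 := ball_mem_nhds 0 one_pos
  have hdiff : ∀ᶠ w in 𝓝 0, DifferentiableAt ℂ (fun w => w * deriv g w / g w) w := by
    filter_upwards [hball, (hd.continuousOn.continuousAt hball).eventually_ne hg0] with w hw hgw
    have hdw := isOpen_ball.mem_nhds hw
    exact (differentiableAt_id.mul ((hd.deriv isOpen_ball).differentiableAt hdw)).div
      (hd.differentiableAt hdw) hgw
  obtain ⟨w, hle, hw, hw0⟩ :=
    ((frequently_re_le_re_of_eventually_differentiableAt hdiff).and_eventually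
      ((eventually_nhdsWithin_of_eventually_nhds hball).and self_mem_nhdsWithin)).exists
  have := hg w hw hw0
  simp only [zero_mul, zero_div, Complex.zero_re] at hle
  linarith

theorem coeff_bounds_of_ratio_coeff_bounds {ρ : ℝ} {a₂ a₃ : ℂ} (h₂ : ‖a₂‖ ≤ 2 * (1 - ρ))
    (hp : ‖2 * a₃ - a₂ ^ 2‖ ≤ 2 * (1 - ρ)) (hq : ‖3 * a₂ ^ 2 - 2 * a₃‖ ≤ 2 * (1 - ρ)) :
    ‖a₂‖ ≤ √(2 * (1 - ρ)) ∧ ‖a₃‖ ≤ 2 * (1 - ρ) ∧ ‖a₃‖ ≤ (1 - ρ) * (3 - 2 * ρ) := by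
  have hsq : ‖a₂‖ ^ 2 ≤ 2 * (1 - ρ) := by
    have : 2 * ‖a₂‖ ^ 2 ≤ ‖2 * a₃ - a₂ ^ 2‖ + ‖3 * a₂ ^ 2 - 2 * a₃‖ := by
      calc 2 * ‖a₂‖ ^ 2 = ‖(2 * a₃ - a₂ ^ 2) + (3 * a₂ ^ 2 - 2 * a₃)‖ := by
            rw [show (2 * a₃ - a₂ ^ 2) + (3 * a₂ ^ 2 - 2 * a₃) = 2 * a₂ ^ 2 by ring, norm_mul,
              norm_pow, Complex.norm_ofNat]
        _ ≤ _ := norm_add_le _ _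
    linarith
  refine ⟨Real.le_sqrt_of_sq_le hsq, ?_, ?_⟩
  · have : 4 * ‖a₃‖ ≤ 3 * ‖2 * a₃ - a₂ ^ 2‖ + ‖3 * a₂ ^ 2 - 2 * a₃‖ := by
      calc 4 * ‖a₃‖ = ‖3 * (2 * a₃ - a₂ ^ 2) + (3 * a₂ ^ 2 - 2 * a₃)‖ := by
            rw [show 3 * (2 * a₃ - a₂ ^ 2) + (3 * a₂ ^ 2 - 2 * a₃) = 4 * a₃ by ring, norm_mul,
              Complex.norm_ofNat]
        _ ≤ _ := (norm_add_le _ _).trans_eq (by rw [norm_mul, Complex.norm_ofNat])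
    linarith
  · have : 2 * ‖a₃‖ ≤ ‖2 * a₃ - a₂ ^ 2‖ + ‖a₂‖ ^ 2 := by
      calc 2 * ‖a₃‖ = ‖(2 * a₃ - a₂ ^ 2) + a₂ ^ 2‖ := by
            rw [sub_add_cancel, norm_mul, Complex.norm_ofNat]
        _ ≤ _ := (norm_add_le _ _).trans_eq (by rw [norm_pow])
    nlinarith [norm_nonneg a₂]

theorem stmt_17
    (ρ : ℝ) (f g : ℂ → ℂ) (h : MemSTrho ρ f g)
    (a : ℕ → ℂ) (ha : ∀ n, a n = iteratedDeriv n f 0 / (n.factorial : ℂ))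
    (hρ0 : 0 ≤ ρ) (hρ1 : ρ < 1) :
    (ρ ≤ 1/2 → ‖a 2‖ ≤ Real.sqrt (2*(1-ρ))) ∧
    (1/2 ≤ ρ → ‖a 2‖ ≤ 2*(1-ρ)) ∧
    (ρ ≤ 1/2 → ‖a 3‖ ≤ 2*(1-ρ)) ∧
    (1/2 ≤ ρ → ‖a 3‖ ≤ (1-ρ)*(3-2*ρ)) := by
  obtain ⟨⟨hfd, hf0, hf1, hfinj, hgd, hginj, hfg⟩, hf, hg⟩ :
    IsBiUnivalent f g ∧ IsStarlikeOfOrder ρ f ∧ IsStarlikeOfOrder ρ g := h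
  have hball : ball (0 : ℂ) 1 ∈ 𝓝 0 := ball_mem_nhds 0 one_pos
  have hg0 : g 0 = 0 := hg.apply_zero hρ0 hgd
  have hinv : f ∘ g =ᶠ[𝓝 0] id := by
    filter_upwards [ball_mem_nhds (0 : ℂ) (by norm_num : (0 : ℝ) < 1 / 4)] with w hw
    exact hfg w (mem_ball_zero_iff.mp hw)
  obtain ⟨hg1, hg2, hg3⟩ := derivs_of_comp_eventuallyEq_id (hfd.analyticAt hball).contDiffAt
    (hgd.analyticAt hball).contDiffAt hg0 hf1 hinv
  obtain ⟨hfa2, hfp⟩ := hf.coeff_bounds hρ1 hfd hf0 hf1 hfinj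
  obtain ⟨-, hgq⟩ := hg.coeff_bounds hρ1 hgd hg0 hg1 hginj
  have ha2 : a 2 = iteratedDeriv 2 f 0 / 2 := by simp [ha, Nat.factorial]
  have ha3 : a 3 = iteratedDeriv 3 f 0 / 6 := by simp [ha, Nat.factorial]
  rw [← ha2] at hfa2
  rw [← ha2, ← ha3] at hfp
  rw [hg2, hg3, show 2 * ((3 * iteratedDeriv 2 f 0 ^ 2 - iteratedDeriv 3 f 0) / 6) -
    (-iteratedDeriv 2 f 0 / 2) ^ 2 = 3 * a 2 ^ 2 - 2 * a 3 by rw [ha2, ha3]; ring] at hgq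
  obtain ⟨hsqrt, ha3_le, ha3_le'⟩ := coeff_bounds_of_ratio_coeff_bounds hfa2 hfp hgq
  exact ⟨fun _ => hsqrt, fun _ => hfa2, fun _ => ha3_le, fun _ => ha3_le'⟩
end
end
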